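/- Let p be a prime number, and let N ≥ 1, n ≥ 1, ν ≥ 0 be integers with n ≢ 0 (mod p−1). If v_p(N−1) ≥ ν + 1 + v_p(∏_{k=0}^{n} (1+k)!) + v_p(n), then B_{N,n}/n ≡ B_n/n (mod p^{ν+1}), i.e., the p-adic valuation of B_{N,n}/n − B_n/n is at least ν+1. -/

import Mathlib

/-- The power series ∑_{i≥0} (N!/(N+i)!) xⁱ over ℚ. -/
noncomputable def hgSeries (N : ℕ) : PowerSeries ℚ :=
  PowerSeries.mk fun i => (N.factorial : ℚ) / ((N + i).factorial : ℚ)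

/-- The hypergeometric Bernoulli number `B_{N,n}`, defined so that
`∑ (B_{N,n}/n!) xⁿ` is the multiplicative inverse of `hgSeries N` in ℚ[[x]]. -/
noncomputable def hB (N n : ℕ) : ℚ :=
  (n.factorial : ℚ) * PowerSeries.coeff n (hgSeries N)⁻¹

/-!
Write `a_m(N)` for the coefficients of `(hgSeries N)⁻¹`, so that `B_{N,n} = n! a_n(N)` and
`B_n = n! a_n(1)`. The coefficients of `hgSeries N` are `c_i(N) = 1 / ((N+1)⋯(N+i))`, and
`(N+1)⋯(N+i) ≡ 2⋯(i+1) = (i+1)!` modulo `N - 1`. As long as `N - 1` is `p`-adically smaller than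
`(n+1)!`, this gives `|c_i(N)| = |(i+1)!|⁻¹` and `|c_i(N) - c_i(1)| ≤ |N-1| |(i+1)!|⁻²` for `i ≤ n`.
Feeding these into the recursion `a_m = -∑_{i ≥ 1} c_i a_{m-i}`, induction on `m` gives
`|a_m(N)| ≤ |sf(m+1)|⁻¹` and `|a_m(N) - a_m(1)| ≤ |N-1| |sf(m+1) (m+1)|⁻¹`, where
`sf(m+1) = ∏_{k ≤ m} (k+1)!`; the needed inequalities between these weights are divisibilities
of superfactorials, up to the factor `2! = 2`, a `p`-adic unit for odd `p`. Multiplying by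
`n!/n` and using `|n!| ≤ |n+1|`, valid for odd `p` with `n+1 ≠ p`, concludes.
-/

open Finset PowerSeries
open scoped Nat

namespace Nat

theorem superFactorial_add_one (n : ℕ) : superFactorial (n + 1) = (n + 1)! * superFactorial n :=
  rfl

theorem superFactorial_ne_zero : ∀ n, superFactorial n ≠ 0
  | 0 => one_ne_zero
  | n + 1 => mul_ne_zero (factorial_ne_zero _) (superFactorial_ne_zero n)

theorem factorial_dvd_superFactorial : ∀ n, n ! ∣ superFactorial n
  | 0 => dvd_rfl
  | _ + 1 => dvd_mul_right _ _

theorem superFactorial_dvd_superFactorial {m n : ℕ} (h : m ≤ n) :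
    superFactorial m ∣ superFactorial n := by
  induction n, h using Nat.le_induction with
  | base => rfl
  | succ n _ ih => exact superFactorial_add_one n ▸ ih.mul_left _

theorem factorial_mul_superFactorial_dvd (i j : ℕ) :
    (i + 1)! * superFactorial (j + 1) ∣ superFactorial (i + j + 1) := by
  rcases i with _ | i
  · simp
  rw [superFactorial_add_one (i + 1 + j)]
  exact mul_dvd_mul (factorial_dvd_factorial (by omega))
    (superFactorial_dvd_superFactorial (by omega))

theorem factorial_sq_mul_superFactorial_dvd {i j : ℕ} (hi : 2 ≤ i) :
    (i + 1)! ^ 2 * superFactorial (j + 1) ∣ superFactorial (i + j + 1) * (i + j + 1) := by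
  obtain ⟨k, rfl⟩ := Nat.exists_eq_add_of_le' hi
  have hsf : superFactorial (k + 2 + j + 1) * (k + 2 + j + 1)
      = (k + j + 3)! ^ 2 * superFactorial (k + j + 1) := by
    rw [show k + 2 + j + 1 = k + j + 1 + 1 + 1 by omega, superFactorial_add_one,
      superFactorial_add_one, factorial_succ (k + j + 1 + 1)]
    ring
  rw [hsf]
  exact mul_dvd_mul (pow_dvd_pow_of_dvd (factorial_dvd_factorial (by omega)) 2)
    (superFactorial_dvd_superFactorial (by omega))

theorem factorial_mul_superFactorial_mul_dvd {i j : ℕ} (hi : 2 ≤ i) (hj : 1 ≤ j) :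
    (i + 1)! * (superFactorial (j + 1) * (j + 1)) ∣ superFactorial (i + j + 1) := by
  obtain ⟨k, rfl⟩ := Nat.exists_eq_add_of_le' hi
  have hsf : superFactorial (k + 2 + j + 1)
      = (k + j + 2)! * (superFactorial (k + j + 1) * (k + j + 3)!) := by
    rw [show k + 2 + j + 1 = k + j + 1 + 1 + 1 by omega, superFactorial_add_one,
      superFactorial_add_one]
    ring
  rw [hsf]
  exact mul_dvd_mul (factorial_dvd_factorial (by omega))
    (mul_dvd_mul (superFactorial_dvd_superFactorial (by omega))
      (dvd_factorial (by omega) (by omega)))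

theorem ModEq.ascFactorial {a b d : ℕ} (h : a ≡ b [MOD d]) (k : ℕ) :
    a.ascFactorial k ≡ b.ascFactorial k [MOD d] := by
  induction k with
  | zero => rfl
  | succ k ih => simpa only [ascFactorial_succ] using (h.add_right k).mul ih

theorem two_ascFactorial (i : ℕ) : (2 : ℕ).ascFactorial i = (i + 1)! := by
  simpa [add_comm] using factorial_mul_ascFactorial 1 i

theorem mul_lt_pow_of_three_le {a b : ℕ} (hb : 3 ≤ b) (ha : 2 ≤ a) : a * b < b ^ a := by
  obtain ⟨k, rfl⟩ := Nat.exists_eq_add_of_le' ha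
  calc (k + 2) * b ≤ 2 ^ (k + 1) * b := Nat.mul_le_mul_right b Nat.lt_two_pow_self
    _ < b ^ (k + 1) * b :=
        Nat.mul_lt_mul_of_pos_right (Nat.pow_lt_pow_left (by omega) (by omega)) (by omega)
    _ = b ^ (k + 2) := (pow_succ b (k + 1)).symm

end Nat

theorem padicNorm_natCast_eq_zpow {p k : ℕ} (hk : k ≠ 0) :
    padicNorm p (k : ℚ) = (p : ℚ) ^ (-(padicValNat p k : ℤ)) := by
  rw [padicNorm.eq_zpow_of_nonzero (by exact_mod_cast hk), padicValRat.of_nat]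

section padicNorm

variable {p : ℕ} [hp : Fact p.Prime]

theorem padicNorm_natCast_le_of_dvd {a b : ℕ} (h : a ∣ b) :
    padicNorm p (b : ℚ) ≤ padicNorm p (a : ℚ) := by
  obtain ⟨c, rfl⟩ := h
  rw [Nat.cast_mul, padicNorm.mul]
  exact mul_le_of_le_one_right (padicNorm.nonneg _) (padicNorm.of_nat c)

theorem padicNorm_natCast_pos {k : ℕ} (hk : k ≠ 0) : 0 < padicNorm p (k : ℚ) := by
  rw [padicNorm_natCast_eq_zpow hk]
  exact zpow_pos (by exact_mod_cast hp.out.pos) _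

theorem padicNorm_natCast_lt_of_padicValNat_lt {a b : ℕ} (ha : a ≠ 0) (hb : b ≠ 0)
    (h : padicValNat p a < padicValNat p b) : padicNorm p (b : ℚ) < padicNorm p (a : ℚ) := by
  rw [padicNorm_natCast_eq_zpow ha, padicNorm_natCast_eq_zpow hb]
  exact zpow_lt_zpow_right₀ (by exact_mod_cast hp.out.one_lt) (by omega)

theorem padicNorm_natCast_le_zpow_mul {a b c k : ℕ} (ha : a ≠ 0) (hb : b ≠ 0) (hc : c ≠ 0)
    (h : k + padicValNat p a + padicValNat p b ≤ padicValNat p c) :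
    padicNorm p (c : ℚ) ≤ (p : ℚ) ^ (-(k : ℤ)) * (padicNorm p (a : ℚ) * padicNorm p (b : ℚ)) := by
  have hp0 : (p : ℚ) ≠ 0 := by exact_mod_cast hp.out.ne_zero
  rw [padicNorm_natCast_eq_zpow ha, padicNorm_natCast_eq_zpow hb, padicNorm_natCast_eq_zpow hc,
    ← zpow_add₀ hp0, ← zpow_add₀ hp0]
  exact zpow_le_zpow_right₀ (by exact_mod_cast hp.out.one_le) (by omega)

theorem padicNorm_two (hp2 : p ≠ 2) : padicNorm p 2 = 1 := by
  have h := (padicNorm.nat_eq_one_iff (p := p) 2).mpr fun hdvd =>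
    hp2 ((Nat.prime_dvd_prime_iff_eq hp.out Nat.prime_two).mp hdvd)
  exact_mod_cast h

theorem padicNorm_sub_le_of_modEq {a b d : ℕ} (h : a ≡ b [MOD d]) :
    padicNorm p ((a : ℚ) - b) ≤ padicNorm p (d : ℚ) := by
  obtain ⟨c, hc⟩ := Nat.modEq_iff_dvd.mp h.symm
  have hab : (a : ℚ) - b = (d : ℚ) * (c : ℚ) := by exact_mod_cast hc
  rw [hab, padicNorm.mul]
  exact mul_le_of_le_one_right (padicNorm.nonneg _) (padicNorm.of_int c)

theorem padicNorm_eq_of_padicNorm_sub_lt {x y : ℚ} (h : padicNorm p (x - y) < padicNorm p y) :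
    padicNorm p x = padicNorm p y := by
  rw [← sub_add_cancel x y, padicNorm.add_eq_max_of_ne h.ne, max_eq_right h.le]

theorem padicNorm_mul_le_of_le_mul {x y t : ℚ} {m : ℕ} (hm : m ≠ 0)
    (hx : padicNorm p x = (padicNorm p (m : ℚ))⁻¹) (hy : padicNorm p y ≤ padicNorm p (m : ℚ) * t) :
    padicNorm p (x * y) ≤ t := by
  rwa [padicNorm.mul, hx, inv_mul_le_iff₀ (padicNorm_natCast_pos hm)]

theorem div_le_padicValNat_factorial (n : ℕ) : n / p ≤ padicValNat p n ! := by
  rw [← padicValNat_mul_div_factorial, padicValNat_factorial_mul]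
  exact Nat.le_add_left _ _

theorem padicValNat_add_one_le_padicValNat_factorial (hp2 : p ≠ 2) {n : ℕ} (hn : n + 1 ≠ p) :
    padicValNat p (n + 1) ≤ padicValNat p n ! := by
  set a := padicValNat p (n + 1)
  have hp3 : 3 ≤ p := by have := hp.out.two_le; omega
  have hdvd : p ^ a ∣ n + 1 := pow_padicValNat_dvd
  suffices a * p ≤ n from
    ((Nat.le_div_iff_mul_le hp.out.pos).mpr this).trans (div_le_padicValNat_factorial n)
  rcases (show a = 0 ∨ a = 1 ∨ 2 ≤ a by omega) with ha | ha | ha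
  · simp [ha]
  · obtain ⟨c, hc⟩ : p ∣ n + 1 := by simpa [ha] using hdvd
    have hc1 : c ≠ 1 := by rintro rfl; exact hn (by simpa using hc)
    have hc0 : c ≠ 0 := by rintro rfl; simp at hc
    rw [ha, one_mul]
    nlinarith [show 2 ≤ c by omega]
  · have := Nat.mul_lt_pow_of_three_le hp3 ha
    have := Nat.le_of_dvd n.succ_pos hdvd
    omega

theorem padicNorm_factorial_le_padicNorm_add_one (hp2 : p ≠ 2) {n : ℕ} (hn : n + 1 ≠ p) :
    padicNorm p (n ! : ℚ) ≤ padicNorm p ((n + 1 : ℕ) : ℚ) := by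
  rw [padicNorm_natCast_eq_zpow n.factorial_ne_zero, padicNorm_natCast_eq_zpow n.add_one_ne_zero]
  exact zpow_le_zpow_right₀ (by exact_mod_cast hp.out.one_le)
    (by have := padicValNat_add_one_le_padicValNat_factorial hp2 hn; omega)

theorem padicNorm_factorial_mul_div_le (hp2 : p ≠ 2) {n : ℕ} (hn0 : n ≠ 0) (hnp : n + 1 ≠ p)
    {e ε : ℚ} (he : padicNorm p (e * (((n + 1).superFactorial * (n + 1) : ℕ) : ℚ)) ≤ ε) :
    padicNorm p ((n ! : ℚ) * e / n) ≤
      ε / (padicNorm p ((n + 1).superFactorial : ℚ) * padicNorm p (n : ℚ)) := by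
  have hsf := padicNorm_natCast_pos (p := p) (n + 1).superFactorial_ne_zero
  rw [padicNorm.div, ← div_div, div_le_div_iff_of_pos_right (padicNorm_natCast_pos hn0),
    le_div_iff₀ hsf]
  calc padicNorm p ((n ! : ℚ) * e) * padicNorm p ((n + 1).superFactorial : ℚ)
      ≤ padicNorm p ((n + 1 : ℕ) : ℚ) * padicNorm p e *
          padicNorm p ((n + 1).superFactorial : ℚ) := by
        rw [padicNorm.mul]
        gcongr
        · exact padicNorm.nonneg _
        · exact padicNorm_factorial_le_padicNorm_add_one hp2 hnp
    _ = padicNorm p (e * (((n + 1).superFactorial * (n + 1) : ℕ) : ℚ)) := by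
        push_cast
        simp only [padicNorm.mul]
        ring
    _ ≤ ε := he

end padicNorm

namespace PowerSeries

variable {p : ℕ} [Fact p.Prime]

theorem padicNorm_coeff_mul_mul_le {u v : ℚ⟦X⟧} {w t : ℚ} {m : ℕ}
    (h : ∀ x ∈ antidiagonal m, padicNorm p (coeff x.1 u * coeff x.2 v * w) ≤ t) :
    padicNorm p (coeff m (u * v) * w) ≤ t := by
  rw [coeff_mul, sum_mul]
  exact padicNorm.sum_le ⟨(0, m), by simp⟩ h

theorem padicNorm_coeff_inv_mul_le {f : ℚ⟦X⟧} (hf : constantCoeff f = 1) {R : ℕ → ℚ} {n : ℕ}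
    (hR0 : padicNorm p (R 0) ≤ 1)
    (hR : ∀ i j, 0 < i → i + j ≤ n → padicNorm p (coeff i f * R (i + j)) ≤ padicNorm p (R j)) :
    ∀ m ≤ n, padicNorm p (coeff m f⁻¹ * R m) ≤ 1 := by
  intro m
  induction m using Nat.strong_induction_on with
  | _ m ih =>
  intro hm
  obtain rfl | hm0 := Nat.eq_zero_or_pos m
  · simpa [hf] using hR0
  have hinv : f⁻¹ = 1 - (f - 1) * f⁻¹ := by
    rw [sub_mul, one_mul, PowerSeries.mul_inv_cancel f (by simp [hf]), sub_sub_cancel]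
  rw [hinv, map_sub, coeff_one, if_neg hm0.ne', zero_sub, neg_mul, padicNorm.neg]
  refine padicNorm_coeff_mul_mul_le fun ⟨i, j⟩ hij => ?_
  rw [HasAntidiagonal.mem_antidiagonal] at hij
  obtain rfl | hi := Nat.eq_zero_or_pos i
  · simp [hf]
  calc padicNorm p (coeff i (f - 1) * coeff j f⁻¹ * R m)
      = padicNorm p (coeff i f * R (i + j)) * padicNorm p (coeff j f⁻¹) := by
        rw [map_sub, coeff_one, if_neg hi.ne', sub_zero, ← hij, mul_right_comm, padicNorm.mul]
    _ ≤ padicNorm p (R j) * padicNorm p (coeff j f⁻¹) :=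
        mul_le_mul_of_nonneg_right (hR i j hi (hij ▸ hm)) (padicNorm.nonneg _)
    _ ≤ 1 := by
        rw [mul_comm, ← padicNorm.mul]
        exact ih j (by omega) (by omega)

theorem padicNorm_coeff_inv_sub_inv_mul_le {f g : ℚ⟦X⟧} (hf : constantCoeff f = 1)
    (hg : constantCoeff g = 1) {R S : ℕ → ℚ} {ε : ℚ} {n : ℕ}
    (hfR : ∀ m ≤ n, padicNorm p (coeff m f⁻¹ * R m) ≤ 1)
    (hfg : ∀ i j, 0 < i → i + j ≤ n →
      padicNorm p ((coeff i f - coeff i g) * S (i + j)) ≤ padicNorm p (ε * R j))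
    (hgS : ∀ i j, 0 < i → 0 < j → i + j ≤ n →
      padicNorm p (coeff i g * S (i + j)) ≤ padicNorm p (S j)) :
    ∀ m ≤ n, padicNorm p (coeff m (f⁻¹ - g⁻¹) * S m) ≤ padicNorm p ε := by
  intro m
  induction m using Nat.strong_induction_on with
  | _ m ih =>
  intro hm
  have hdiff : f⁻¹ - g⁻¹ = -((f - g) * f⁻¹) - (g - 1) * (f⁻¹ - g⁻¹) := by
    have hf' := PowerSeries.mul_inv_cancel f (by simp [hf])
    have hg' := PowerSeries.mul_inv_cancel g (by simp [hg])
    linear_combination hf' - hg'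
  rw [hdiff, map_sub, map_neg, sub_mul, neg_mul]
  refine padicNorm.sub.trans (max_le ?_ ?_)
  · rw [padicNorm.neg]
    refine padicNorm_coeff_mul_mul_le fun ⟨i, j⟩ hij => ?_
    rw [HasAntidiagonal.mem_antidiagonal] at hij
    obtain rfl | hi := Nat.eq_zero_or_pos i
    · simp [hf, hg, padicNorm.nonneg]
    calc padicNorm p (coeff i (f - g) * coeff j f⁻¹ * S m)
        = padicNorm p ((coeff i f - coeff i g) * S (i + j)) * padicNorm p (coeff j f⁻¹) := by
          rw [map_sub, ← hij, mul_right_comm, padicNorm.mul]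
      _ ≤ padicNorm p (ε * R j) * padicNorm p (coeff j f⁻¹) :=
          mul_le_mul_of_nonneg_right (hfg i j hi (hij ▸ hm)) (padicNorm.nonneg _)
      _ ≤ padicNorm p ε := by
          rw [padicNorm.mul, mul_assoc, ← padicNorm.mul, mul_comm (R j)]
          exact mul_le_of_le_one_right (padicNorm.nonneg _) (hfR j (by omega))
  · refine padicNorm_coeff_mul_mul_le fun ⟨i, j⟩ hij => ?_
    rw [HasAntidiagonal.mem_antidiagonal] at hij
    obtain rfl | hi := Nat.eq_zero_or_pos i
    · simp [hg, padicNorm.nonneg]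
    obtain rfl | hj := Nat.eq_zero_or_pos j
    · simp [hf, hg, padicNorm.nonneg]
    calc padicNorm p (coeff i (g - 1) * coeff j (f⁻¹ - g⁻¹) * S m)
        = padicNorm p (coeff i g * S (i + j)) * padicNorm p (coeff j (f⁻¹ - g⁻¹)) := by
          rw [map_sub (coeff i) g 1, coeff_one, if_neg hi.ne', sub_zero, ← hij, mul_right_comm,
            padicNorm.mul]
      _ ≤ padicNorm p (S j) * padicNorm p (coeff j (f⁻¹ - g⁻¹)) :=
          mul_le_mul_of_nonneg_right (hgS i j hi hj (hij ▸ hm)) (padicNorm.nonneg _)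
      _ ≤ padicNorm p ε := by
          rw [mul_comm, ← padicNorm.mul]
          exact ih j (by omega) (by omega)

end PowerSeries

theorem coeff_hgSeries (N i : ℕ) :
    coeff i (hgSeries N) = (((N + 1).ascFactorial i : ℕ) : ℚ)⁻¹ := by
  rw [hgSeries, coeff_mk, ← Nat.factorial_mul_ascFactorial N i, Nat.cast_mul,
    div_mul_cancel_left₀ (by exact_mod_cast N.factorial_ne_zero)]

theorem coeff_hgSeries_one (i : ℕ) : coeff i (hgSeries 1) = (((i + 1)! : ℕ) : ℚ)⁻¹ := by
  rw [coeff_hgSeries, Nat.two_ascFactorial]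

theorem constantCoeff_hgSeries (N : ℕ) : constantCoeff (hgSeries N) = 1 := by
  rw [← coeff_zero_eq_constantCoeff_apply, coeff_hgSeries, Nat.ascFactorial_zero,
    Nat.cast_one, inv_one]

theorem hgSeries_one_inv : (hgSeries 1)⁻¹ = bernoulliPowerSeries ℚ := by
  have hX : X * hgSeries 1 = exp ℚ - 1 := by
    ext (_ | i)
    · simp
    · rw [coeff_succ_X_mul, coeff_hgSeries_one, map_sub, coeff_exp, coeff_one,
        if_neg i.succ_ne_zero, sub_zero]
      simp
  rw [PowerSeries.inv_eq_iff_mul_eq_one (by simp [constantCoeff_hgSeries])]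
  refine mul_left_cancel₀ (X_ne_zero (R := ℚ)) ?_
  rw [mul_one, mul_left_comm, hX, bernoulliPowerSeries_mul_exp_sub_one]

theorem hB_one (n : ℕ) : hB 1 n = bernoulli n := by
  rw [hB, hgSeries_one_inv, bernoulliPowerSeries, coeff_mk, Algebra.algebraMap_self,
    RingHom.id_apply, mul_div_cancel₀ _ (by exact_mod_cast n.factorial_ne_zero)]

section hgSeries

variable {p : ℕ} [Fact p.Prime] {d i : ℕ}

theorem padicNorm_ascFactorial_sub_factorial_le :
    padicNorm p ((((d + 1 + 1).ascFactorial i : ℕ) : ℚ) - ((i + 1)! : ℕ)) ≤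
      padicNorm p (d : ℚ) := by
  refine padicNorm_sub_le_of_modEq ?_
  rw [← Nat.two_ascFactorial]
  exact Nat.ModEq.ascFactorial (Nat.add_modEq_left (n := d) (a := 2)) i

theorem padicNorm_coeff_hgSeries (hd : padicNorm p (d : ℚ) < padicNorm p ((i + 1)! : ℚ)) :
    padicNorm p (coeff i (hgSeries (d + 1))) = padicNorm p (coeff i (hgSeries 1)) := by
  rw [coeff_hgSeries, coeff_hgSeries_one, IsAbsoluteValue.abv_inv (padicNorm p),
    IsAbsoluteValue.abv_inv (padicNorm p),
    padicNorm_eq_of_padicNorm_sub_lt (padicNorm_ascFactorial_sub_factorial_le.trans_lt hd)]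

theorem padicNorm_coeff_hgSeries_sub_le (hd : padicNorm p (d : ℚ) < padicNorm p ((i + 1)! : ℚ)) :
    padicNorm p (coeff i (hgSeries (d + 1)) - coeff i (hgSeries 1)) ≤
      padicNorm p (d : ℚ) * padicNorm p (coeff i (hgSeries 1)) ^ 2 := by
  have hA : (((d + 1 + 1).ascFactorial i : ℕ) : ℚ) ≠ 0 := by
    exact_mod_cast (Nat.ascFactorial_pos _ _).ne'
  have hfac : (((i + 1)! : ℕ) : ℚ) ≠ 0 := by exact_mod_cast (i + 1).factorial_ne_zero
  have hsub : coeff i (hgSeries (d + 1)) - coeff i (hgSeries 1) =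
      -((((d + 1 + 1).ascFactorial i : ℕ) : ℚ) - ((i + 1)! : ℕ)) * coeff i (hgSeries (d + 1)) *
        coeff i (hgSeries 1) := by
    rw [coeff_hgSeries, coeff_hgSeries_one]
    field_simp
    ring
  rw [hsub, padicNorm.mul, padicNorm.mul, padicNorm.neg, padicNorm_coeff_hgSeries hd, mul_assoc,
    ← sq]
  exact mul_le_mul_of_nonneg_right padicNorm_ascFactorial_sub_factorial_le (sq_nonneg _)

end hgSeries

section weights

variable {p : ℕ} [Fact p.Prime] {i j : ℕ}

theorem padicNorm_superFactorial_le :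
    padicNorm p ((i + j + 1).superFactorial : ℚ) ≤
      padicNorm p ((i + 1)! : ℚ) * padicNorm p ((j + 1).superFactorial : ℚ) := by
  rw [← padicNorm.mul, ← Nat.cast_mul]
  exact padicNorm_natCast_le_of_dvd (Nat.factorial_mul_superFactorial_dvd i j)

theorem padicNorm_superFactorial_mul_le_sq (hp2 : p ≠ 2) (hi : 1 ≤ i) :
    padicNorm p (((i + j + 1).superFactorial * (i + j + 1) : ℕ) : ℚ) ≤
      padicNorm p ((i + 1)! : ℚ) ^ 2 * padicNorm p ((j + 1).superFactorial : ℚ) := by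
  obtain rfl | hi := hi.eq_or_lt
  · rw [show (1 + 1)! = 2 from rfl, Nat.cast_ofNat, padicNorm_two hp2, one_pow, one_mul]
    exact padicNorm_natCast_le_of_dvd
      (dvd_mul_of_dvd_left (Nat.superFactorial_dvd_superFactorial (by omega)) _)
  · rw [← IsAbsoluteValue.abv_pow (padicNorm p), ← padicNorm.mul, ← Nat.cast_pow, ← Nat.cast_mul]
    exact padicNorm_natCast_le_of_dvd (Nat.factorial_sq_mul_superFactorial_dvd hi)

theorem padicNorm_superFactorial_mul_le (hp2 : p ≠ 2) (hi : 1 ≤ i) (hj : 1 ≤ j) :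
    padicNorm p (((i + j + 1).superFactorial * (i + j + 1) : ℕ) : ℚ) ≤
      padicNorm p ((i + 1)! : ℚ) * padicNorm p (((j + 1).superFactorial * (j + 1) : ℕ) : ℚ) := by
  obtain rfl | hi := hi.eq_or_lt
  · rw [show (1 + 1)! = 2 from rfl, Nat.cast_ofNat, padicNorm_two hp2, one_mul]
    refine padicNorm_natCast_le_of_dvd (dvd_mul_of_dvd_left ?_ _)
    rw [show 1 + j + 1 = j + 1 + 1 by omega, Nat.superFactorial_add_one (j + 1),
      mul_comm ((j + 1 + 1)!)]
    exact mul_dvd_mul_left _ (Nat.dvd_factorial (by omega) (by omega))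
  · rw [← padicNorm.mul, ← Nat.cast_mul]
    exact padicNorm_natCast_le_of_dvd
      (dvd_mul_of_dvd_left (Nat.factorial_mul_superFactorial_mul_dvd hi hj) _)

theorem padicNorm_coeff_hgSeries_one (i : ℕ) :
    padicNorm p (coeff i (hgSeries 1)) = (padicNorm p ((i + 1)! : ℚ))⁻¹ := by
  rw [coeff_hgSeries_one, IsAbsoluteValue.abv_inv (padicNorm p)]

theorem padicNorm_coeff_hgSeries_one_mul_le (hp2 : p ≠ 2) (hi : 1 ≤ i) (hj : 1 ≤ j) :
    padicNorm p (coeff i (hgSeries 1) * (((i + j + 1).superFactorial * (i + j + 1) : ℕ) : ℚ)) ≤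
      padicNorm p (((j + 1).superFactorial * (j + 1) : ℕ) : ℚ) :=
  padicNorm_mul_le_of_le_mul (i + 1).factorial_ne_zero (padicNorm_coeff_hgSeries_one i)
    (padicNorm_superFactorial_mul_le hp2 hi hj)

variable {d n : ℕ}

theorem padicNorm_lt_padicNorm_factorial_of_le
    (hd : padicNorm p (d : ℚ) < padicNorm p ((n + 1)! : ℚ)) (hi : i ≤ n) :
    padicNorm p (d : ℚ) < padicNorm p ((i + 1)! : ℚ) :=
  hd.trans_le (padicNorm_natCast_le_of_dvd (Nat.factorial_dvd_factorial (by omega)))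

theorem padicNorm_coeff_hgSeries_mul_superFactorial_le
    (hd : padicNorm p (d : ℚ) < padicNorm p ((n + 1)! : ℚ)) (hij : i + j ≤ n) :
    padicNorm p (coeff i (hgSeries (d + 1)) * ((i + j + 1).superFactorial : ℚ)) ≤
      padicNorm p ((j + 1).superFactorial : ℚ) :=
  padicNorm_mul_le_of_le_mul (i + 1).factorial_ne_zero
    (by rw [padicNorm_coeff_hgSeries (padicNorm_lt_padicNorm_factorial_of_le hd (by omega)),
      padicNorm_coeff_hgSeries_one])
    padicNorm_superFactorial_le

theorem padicNorm_coeff_hgSeries_sub_mul_le (hp2 : p ≠ 2)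
    (hd : padicNorm p (d : ℚ) < padicNorm p ((n + 1)! : ℚ)) (hi : 0 < i) (hij : i + j ≤ n) :
    padicNorm p ((coeff i (hgSeries (d + 1)) - coeff i (hgSeries 1)) *
        (((i + j + 1).superFactorial * (i + j + 1) : ℕ) : ℚ)) ≤
      padicNorm p ((d : ℚ) * ((j + 1).superFactorial : ℚ)) := by
  have hdi := padicNorm_lt_padicNorm_factorial_of_le hd (i := i) (by omega)
  set F := padicNorm p ((i + 1)! : ℚ)
  have hF : F ≠ 0 := (padicNorm_natCast_pos (i + 1).factorial_ne_zero).ne'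
  rw [padicNorm.mul, padicNorm.mul]
  calc padicNorm p (coeff i (hgSeries (d + 1)) - coeff i (hgSeries 1)) *
        padicNorm p (((i + j + 1).superFactorial * (i + j + 1) : ℕ) : ℚ)
      ≤ padicNorm p (d : ℚ) * F⁻¹ ^ 2 * (F ^ 2 * padicNorm p ((j + 1).superFactorial : ℚ)) := by
        rw [← padicNorm_coeff_hgSeries_one]
        exact mul_le_mul (padicNorm_coeff_hgSeries_sub_le hdi)
          (padicNorm_superFactorial_mul_le_sq hp2 hi) (padicNorm.nonneg _)
          (mul_nonneg (padicNorm.nonneg _) (sq_nonneg _))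
    _ = padicNorm p (d : ℚ) * padicNorm p ((j + 1).superFactorial : ℚ) := by
        rw [inv_pow, mul_assoc, inv_mul_cancel_left₀ (pow_ne_zero 2 hF)]

end weights

theorem stmt5_general (p : ℕ) (hp : p.Prime) (N n ν : ℕ)
    (hndvd : ¬ (p - 1) ∣ n)
    (hval : ν + 1 + padicValNat p (∏ k ∈ Finset.range (n + 1), (1 + k).factorial)
        + padicValNat p n ≤ padicValNat p (N - 1)) :
    padicNorm p (hB N n / n - bernoulli n / n) ≤ (p : ℚ) ^ (-(ν + 1 : ℤ)) := by
  have := Fact.mk hp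
  have hp2 : p ≠ 2 := by rintro rfl; exact hndvd (one_dvd n)
  have hn0 : n ≠ 0 := by rintro rfl; exact hndvd (dvd_zero _)
  have hnp : n + 1 ≠ p := by rintro rfl; exact hndvd (by simp)
  simp only [add_comm 1, Nat.prod_range_factorial_succ] at hval
  have hd0 : N - 1 ≠ 0 := by intro h; simp [h] at hval
  obtain ⟨d, rfl⟩ : ∃ d, N = d + 1 := ⟨N - 1, by omega⟩
  rw [Nat.add_sub_cancel] at hd0 hval
  have hdν := padicNorm_natCast_le_zpow_mul (p := p) (k := ν + 1)
    (n + 1).superFactorial_ne_zero hn0 hd0 hval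
  have hd : padicNorm p (d : ℚ) < padicNorm p ((n + 1)! : ℚ) :=
    (padicNorm_natCast_lt_of_padicValNat_lt (n + 1).superFactorial_ne_zero hd0
      (by omega)).trans_le (padicNorm_natCast_le_of_dvd (Nat.factorial_dvd_superFactorial _))
  have he := padicNorm_coeff_inv_sub_inv_mul_le (constantCoeff_hgSeries (d + 1))
    (constantCoeff_hgSeries 1) (R := fun j => ((j + 1).superFactorial : ℚ))
    (S := fun j => (((j + 1).superFactorial * (j + 1) : ℕ) : ℚ)) (ε := d)
    (padicNorm_coeff_inv_mul_le (constantCoeff_hgSeries _) (by simp)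
      fun i j _ hij => padicNorm_coeff_hgSeries_mul_superFactorial_le hd hij)
    (fun i j hi hij => padicNorm_coeff_hgSeries_sub_mul_le hp2 hd hi hij)
    (fun i j hi hj _ => padicNorm_coeff_hgSeries_one_mul_le hp2 hi hj) n le_rfl
  rw [← hB_one, hB, hB, ← sub_div, ← mul_sub, ← map_sub]
  refine (padicNorm_factorial_mul_div_le hp2 hn0 hnp he).trans
    (div_le_of_le_mul₀ (mul_nonneg (padicNorm.nonneg _) (padicNorm.nonneg _)) (by positivity) ?_)
  exact_mod_cast hdν

theorem stmt5 (p : ℕ) (hp : p.Prime) (N n ν : ℕ) (hN : 1 ≤ N) (hn : 1 ≤ n)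
    (hndvd : ¬ (p - 1) ∣ n)
    (hval : ν + 1 + padicValNat p (∏ k ∈ Finset.range (n + 1), (1 + k).factorial)
        + padicValNat p n ≤ padicValNat p (N - 1)) :
    padicNorm p (hB N n / n - bernoulli n / n) ≤ (p : ℚ) ^ (-(ν + 1 : ℤ)) :=
  stmt5_general p hp N n ν hndvd hval
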